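/- Let q be an odd integer with 0 < q < m. Then for every t ∈ V_m, ξ⁻_q(t)·(ξ⁻_1(t) − ξ⁻_1(−q)) = (q+1)·ξ⁺_{q+1}(t) in R, where ξ⁻_1(−q) ∈ R is the value of ξ⁻_1 at the vertex −q. -/

import Mathlib

/-!
Write `q = 2r + 1`, so that `ξ⁻_1(−q) = (r+1)(α + (r+1)δ)`. For `t ≥ q + 1`, with
`a = ⌈(t−q)/2⌉`, one has `ξ⁻_1(t) = (a+r)(−α + (a+r)δ)`, hence
`ξ⁻_1(t) − ξ⁻_1(−q) = (a+q)(−α + (a−1)δ)`: the linear factor extends `P⁻(a, a+q−1)` to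
`P⁻(a−1, a+q−1)` and `(a+q)·C(a+q−1, q) = (q+1)·C(a+q, q+1)`. Symmetrically, for
`t ≤ −q−2` and `a = ⌈(−t−q+1)/2⌉` the difference is `(a−1)(α + (a+q)δ)`, which extends
`P⁺(a, a+q−1)` to `P⁺(a, a+q)`, and `(a−1)·C(a+q−1, q) = (q+1)·C(a+q−1, q+1)`.
For `−q−1 ≤ t ≤ q` the right side vanishes, and so does the left: either `ξ⁻_q(t) = 0` or
`t ∈ {−q, −q−1}`, where `ξ⁻_1(t) = ξ⁻_1(−q)`.
-/

noncomputable section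

open Finset MvPolynomial

/-- The coefficient ring `R = ℚ[α,δ]`, realized as polynomials in two variables. -/
abbrev Rpoly : Type := MvPolynomial (Fin 2) ℚ

/-- The variable `α`. -/
def va : Rpoly := X 0

/-- The variable `δ`. -/
def vd : Rpoly := X 1

/-- `P⁻(a,b) = ∏_{k=a}^{b} (−α + k·δ)`. -/
def Pneg (a b : ℤ) : Rpoly :=
  ∏ k ∈ Finset.Icc a b, (-va + MvPolynomial.C (k : ℚ) * vd)

/-- `P⁺(a,b) = ∏_{k=a}^{b} (α + k·δ)`. -/
def Ppos (a b : ℤ) : Rpoly :=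
  ∏ k ∈ Finset.Icc a b, (va + MvPolynomial.C (k : ℚ) * vd)

/-- Binomial coefficient `C(n,q)` (all uses have `n ≥ 0`). -/
def B (n : ℤ) (q : ℕ) : ℚ := (n.toNat).choose q

/-- The Knutson–Tao class `ξ⁺_q = ξ(m+q, m−q)`, as a function on vertices `t`
(the vertex `t` encodes the pair `(m+t, m−t)`). -/
def xiP (m : ℤ) (q : ℕ) (t : ℤ) : Rpoly :=
  if (q : ℤ) ≤ t ∧ t ≤ m then
    MvPolynomial.C (B (⌈((t : ℚ) - (q : ℚ) + 1) / 2⌉ + q - 1) q) *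
      Pneg (⌈((t : ℚ) - (q : ℚ) + 1) / 2⌉ - 1) (⌈((t : ℚ) - (q : ℚ) + 1) / 2⌉ + q - 2)
  else if -m ≤ t ∧ t ≤ -((q : ℤ) + 1) then
    MvPolynomial.C (B (⌈(-(t : ℚ) - (q : ℚ)) / 2⌉ + q - 1) q) *
      Ppos (⌈(-(t : ℚ) - (q : ℚ)) / 2⌉ + 1) (⌈(-(t : ℚ) - (q : ℚ)) / 2⌉ + q)
  else 0

/-- The Knutson–Tao class `ξ⁻_q = ξ(m−q, m+q)`. -/
def xiM (m : ℤ) (q : ℕ) (t : ℤ) : Rpoly :=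
  if (q : ℤ) + 1 ≤ t ∧ t ≤ m then
    MvPolynomial.C (B (⌈((t : ℚ) - (q : ℚ)) / 2⌉ + q - 1) q) *
      Pneg (⌈((t : ℚ) - (q : ℚ)) / 2⌉) (⌈((t : ℚ) - (q : ℚ)) / 2⌉ + q - 1)
  else if -m ≤ t ∧ t ≤ -(q : ℤ) then
    MvPolynomial.C (B (⌈(-(t : ℚ) - (q : ℚ) + 1) / 2⌉ + q - 1) q) *
      Ppos (⌈(-(t : ℚ) - (q : ℚ) + 1) / 2⌉) (⌈(-(t : ℚ) - (q : ℚ) + 1) / 2⌉ + q - 1)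
  else 0

/-- The weight of the vertex `t`: `w(t) = ((1−2t)/2)·α + (t(t−1)/2)·δ`. -/
def w (t : ℤ) : Rpoly :=
  MvPolynomial.C ((1 - 2 * (t : ℚ)) / 2) * va +
    MvPolynomial.C (((t : ℚ) * ((t : ℚ) - 1)) / 2) * vd

lemma ceil_intCast_div_two (n : ℤ) : ⌈(n : ℚ) / 2⌉ = (n + 1) / 2 := by
  have h := Rat.ceil_intCast_div_natCast n 2
  push_cast at h
  omega

lemma B_one {n : ℤ} (hn : 0 ≤ n) : B n 1 = n := by
  rw [B, Nat.choose_one_right]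
  exact_mod_cast Int.toNat_of_nonneg hn

lemma B_mul_add_one {n : ℤ} (q : ℕ) (hn : 0 ≤ n) :
    B n q * (n + 1) = (q + 1) * B (n + 1) (q + 1) := by
  obtain ⟨k, rfl⟩ := Int.eq_ofNat_of_zero_le hn
  have h := Nat.add_one_mul_choose_eq k q
  simp only [B, Int.toNat_natCast, show (k : ℤ) + 1 = ((k + 1 : ℕ) : ℤ) by push_cast; ring]
  push_cast
  exact_mod_cast (by linarith [h] : k.choose q * (k + 1) = (q + 1) * (k + 1).choose (q + 1))

lemma B_mul_sub {n : ℤ} (q : ℕ) (hn : q ≤ n) :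
    B n q * (n - q) = (q + 1) * B n (q + 1) := by
  obtain ⟨k, rfl⟩ := Int.eq_ofNat_of_zero_le (by omega : 0 ≤ n)
  have h := Nat.choose_succ_right_eq k q
  simp only [B, Int.toNat_natCast, Int.cast_natCast]
  rw [← Nat.cast_sub (by omega)]
  exact_mod_cast (by linarith [h] : k.choose q * (k - q) = (q + 1) * k.choose (q + 1))

lemma Pneg_self (a : ℤ) : Pneg a a = -va + C (a : ℚ) * vd := by
  simp [Pneg]

lemma Ppos_self (a : ℤ) : Ppos a a = va + C (a : ℚ) * vd := by
  simp [Ppos]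

lemma Pneg_sub_one {a b : ℤ} (h : a ≤ b + 1) :
    Pneg (a - 1) b = (-va + C ((a - 1 : ℤ) : ℚ) * vd) * Pneg a b := by
  have hI : Icc (a - 1) b = insert (a - 1) (Icc a b) := by ext k; simp; omega
  rw [Pneg, Pneg, hI, prod_insert (by simp)]

lemma Ppos_add_one {a b : ℤ} (h : a ≤ b + 1) :
    Ppos a (b + 1) = Ppos a b * (va + C ((b + 1 : ℤ) : ℚ) * vd) := by
  have hI : Icc a (b + 1) = insert (b + 1) (Icc a b) := by ext k; simp; omega
  rw [Ppos, Ppos, hI, prod_insert (by simp), mul_comm]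

section evaluation

variable {m t a : ℤ} {q : ℕ}

lemma xiM_of_pos (h1 : q + 1 ≤ t) (h2 : t ≤ m) (ha : (t - q + 1) / 2 = a) :
    xiM m q t = C (B (a + q - 1) q) * Pneg a (a + q - 1) := by
  have hc : ⌈((t : ℚ) - q) / 2⌉ = a := by
    rw [← ha, ← ceil_intCast_div_two]; push_cast; rfl
  rw [xiM, if_pos ⟨h1, h2⟩, hc]

lemma xiM_of_neg (h1 : -m ≤ t) (h2 : t ≤ -q) (ha : (-t - q + 2) / 2 = a) :
    xiM m q t = C (B (a + q - 1) q) * Ppos a (a + q - 1) := by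
  have hc : ⌈(-(t : ℚ) - q + 1) / 2⌉ = a := by
    rw [← ha, show -t - q + 2 = (-t - q + 1) + 1 by ring, ← ceil_intCast_div_two]; push_cast; rfl
  rw [xiM, if_neg (by omega), if_pos ⟨h1, h2⟩, hc]

lemma xiM_eq_zero (h1 : -q < t) (h2 : t ≤ q) : xiM m q t = 0 := by
  rw [xiM, if_neg (by omega), if_neg (by omega)]

lemma xiP_of_pos (h1 : q ≤ t) (h2 : t ≤ m) (ha : (t - q + 2) / 2 = a) :
    xiP m q t = C (B (a + q - 1) q) * Pneg (a - 1) (a + q - 2) := by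
  have hc : ⌈((t : ℚ) - q + 1) / 2⌉ = a := by
    rw [← ha, show t - q + 2 = (t - q + 1) + 1 by ring, ← ceil_intCast_div_two]; push_cast; rfl
  rw [xiP, if_pos ⟨h1, h2⟩, hc]

lemma xiP_of_neg (h1 : -m ≤ t) (h2 : t ≤ -(q + 1)) (ha : (-t - q + 1) / 2 = a) :
    xiP m q t = C (B (a + q - 1) q) * Ppos (a + 1) (a + q) := by
  have hc : ⌈(-(t : ℚ) - q) / 2⌉ = a := by
    rw [← ha, ← ceil_intCast_div_two]; push_cast; rfl
  rw [xiP, if_neg (by omega), if_pos ⟨h1, h2⟩, hc]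

lemma xiP_eq_zero (h1 : -(q + 1) < t) (h2 : t < q) : xiP m q t = 0 := by
  rw [xiP, if_neg (by omega), if_neg (by omega)]

lemma xiM_one_of_pos (h1 : 2 ≤ t) (h2 : t ≤ m) :
    xiM m 1 t = C ((t / 2 : ℤ) : ℚ) * (-va + C ((t / 2 : ℤ) : ℚ) * vd) := by
  rw [xiM_of_pos (by omega) h2 (by omega : (t - (1 : ℕ) + 1) / 2 = t / 2), B_one (by omega)]
  simp [Pneg_self]

lemma xiM_one_of_neg (h1 : -m ≤ t) (h2 : t ≤ -1) :
    xiM m 1 t = C (((1 - t) / 2 : ℤ) : ℚ) * (va + C (((1 - t) / 2 : ℤ) : ℚ) * vd) := by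
  rw [xiM_of_neg h1 (by omega) (by omega : (-t - (1 : ℕ) + 2) / 2 = (1 - t) / 2), B_one (by omega)]
  simp [Ppos_self]

end evaluation

section cases

variable {m t : ℤ} {q : ℕ}

lemma xiM_mul_sub_eq_xiP_of_pos (hq : Odd q) (h1 : q + 1 ≤ t) (h2 : t ≤ m) :
    xiM m q t * (xiM m 1 t - xiM m 1 (-q)) = ((q + 1 : ℕ) : Rpoly) * xiP m (q + 1) t := by
  obtain ⟨r, hr⟩ := hq
  obtain ⟨a, ha⟩ : ∃ a, (t - q + 1) / 2 = a := ⟨_, rfl⟩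
  have hdiff :
      xiM m 1 t - xiM m 1 (-q) = C ((a + q : ℤ) : ℚ) * (-va + C ((a - 1 : ℤ) : ℚ) * vd) := by
    rw [xiM_one_of_pos (by omega) h2, xiM_one_of_neg (by omega) (by omega),
      show t / 2 = a + r by omega, show (1 - -(q : ℤ)) / 2 = r + 1 by omega]
    push_cast [hr]
    simp only [map_add, map_sub, map_one, map_natCast, map_intCast, map_mul, map_ofNat]
    ring
  have hB := congrArg (C : ℚ → Rpoly) (B_mul_add_one q (by omega : 0 ≤ a + q - 1))
  rw [xiM_of_pos (by omega) h2 ha, hdiff,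
    xiP_of_pos (by push_cast; omega) h2 (by push_cast; omega : (t - ((q + 1 : ℕ) : ℤ) + 2) / 2 = a),
    show a + ((q + 1 : ℕ) : ℤ) - 2 = a + q - 1 by push_cast; ring,
    show a + ((q + 1 : ℕ) : ℤ) - 1 = a + q - 1 + 1 by push_cast; ring, Pneg_sub_one (by omega)]
  push_cast at hB ⊢
  simp only [map_add, map_sub, map_one, map_natCast, map_intCast, map_mul] at hB ⊢
  linear_combination (Pneg a (a + q - 1) * (-va + (a - 1) * vd)) * hB

lemma xiM_mul_sub_eq_xiP_of_neg (hq : Odd q) (h1 : -m ≤ t) (h2 : t ≤ -q - 2) :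
    xiM m q t * (xiM m 1 t - xiM m 1 (-q)) = ((q + 1 : ℕ) : Rpoly) * xiP m (q + 1) t := by
  obtain ⟨r, hr⟩ := hq
  obtain ⟨a, ha⟩ : ∃ a, (-t - q + 2) / 2 = a := ⟨_, rfl⟩
  have hdiff :
      xiM m 1 t - xiM m 1 (-q) = C ((a - 1 : ℤ) : ℚ) * (va + C ((a + q : ℤ) : ℚ) * vd) := by
    rw [xiM_one_of_neg h1 (by omega), xiM_one_of_neg (by omega) (by omega),
      show (1 - t) / 2 = a + r by omega, show (1 - -(q : ℤ)) / 2 = r + 1 by omega]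
    push_cast [hr]
    simp only [map_add, map_sub, map_one, map_natCast, map_intCast, map_mul, map_ofNat]
    ring
  have hB := congrArg (C : ℚ → Rpoly) (B_mul_sub q (by omega : (q : ℤ) ≤ a + q - 1))
  rw [xiM_of_neg h1 (by omega) ha, hdiff,
    xiP_of_neg h1 (by push_cast; omega)
      (by push_cast; omega : (-t - ((q + 1 : ℕ) : ℤ) + 1) / 2 = a - 1),
    sub_add_cancel, show a - 1 + ((q + 1 : ℕ) : ℤ) - 1 = a + q - 1 by push_cast; ring,
    show a - 1 + ((q + 1 : ℕ) : ℤ) = a + q - 1 + 1 by push_cast; ring, Ppos_add_one (by omega)]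
  push_cast at hB ⊢
  simp only [map_add, map_sub, map_one, map_natCast, map_intCast, map_mul] at hB ⊢
  linear_combination (Ppos a (a + q - 1) * (va + (a + q) * vd)) * hB

lemma xiM_mul_sub_eq_xiP_of_middle (hq : Odd q) (ht : -m ≤ t) (h1 : -q - 1 ≤ t) (h2 : t ≤ q) :
    xiM m q t * (xiM m 1 t - xiM m 1 (-q)) = ((q + 1 : ℕ) : Rpoly) * xiP m (q + 1) t := by
  rw [xiP_eq_zero (by push_cast; omega) (by push_cast; omega), mul_zero]
  rcases lt_or_ge (-(q : ℤ)) t with hlt | hle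
  · rw [xiM_eq_zero hlt h2, zero_mul]
  · obtain ⟨r, hr⟩ := hq
    rw [xiM_one_of_neg ht (by omega), xiM_one_of_neg (by omega) (by omega),
      show (1 - t) / 2 = (1 - -(q : ℤ)) / 2 by omega, sub_self, mul_zero]

end cases

theorem statement4_general (m : ℕ) (q : ℕ) (hodd : Odd q)
    (t : ℤ) (ht1 : -(m : ℤ) ≤ t) (ht2 : t ≤ (m : ℤ)) :
    xiM m q t * (xiM m 1 t - xiM m 1 (-(q : ℤ))) = ((q + 1 : ℕ) : Rpoly) * xiP m (q + 1) t := by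
  rcases le_or_gt ((q : ℤ) + 1) t with hpos | hlt
  · exact xiM_mul_sub_eq_xiP_of_pos hodd hpos ht2
  rcases le_or_gt t (-(q : ℤ) - 2) with hneg | hgt
  · exact xiM_mul_sub_eq_xiP_of_neg hodd ht1 hneg
  · exact xiM_mul_sub_eq_xiP_of_middle hodd ht1 (by omega) (by omega)

/-- for odd `0 < q < m`,
`ξ⁻_q · (ξ⁻_1 − ξ⁻_1(−q)) = (q+1) · ξ⁺_{q+1}` pointwise on `V_m`. -/
theorem statement4 (m : ℕ) (hm : 1 ≤ m) (q : ℕ) (hodd : Odd q)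
    (hq0 : 0 < q) (hqm : q < m)
    (t : ℤ) (ht1 : -(m : ℤ) ≤ t) (ht2 : t ≤ (m : ℤ)) :
    xiM m q t * (xiM m 1 t - xiM m 1 (-(q : ℤ))) = ((q + 1 : ℕ) : Rpoly) * xiP m (q + 1) t :=
  statement4_general m q hodd t ht1 ht2
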